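/- Let G be the graph with vertex set A₁ ∪ A₂ ∪ S, where A₁ = {a₁ʲ : 1 ≤ j ≤ n}, A₂ = {a₂ʲ : 1 ≤ j ≤ n}, S = {sʲ : 1 ≤ j ≤ n}, where A₁ and A₂ are cliques, S is an independent set, and the only other edges are sʲa₁ʲ and sʲa₂ʲ for each j. Then G is P₈-free. -/

import Mathlib

open SimpleGraph Set

variable {V : Type*}

/-- Open neighborhood of a set: vertices outside `A` with a neighbor in `A`. -/
def nbhdSet (G : SimpleGraph V) (A : Set V) : Set V :=
  {v | v ∉ A ∧ ∃ u ∈ A, G.Adj u v}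

/-- Union of closed neighborhoods of vertices of `X`. -/
def closedNbhd (G : SimpleGraph V) (X : Set V) : Set V :=
  X ∪ {v | ∃ u ∈ X, G.Adj u v}

/-- `A` is a connected component of `G - S`. -/
def IsCompOutside (G : SimpleGraph V) (S A : Set V) : Prop :=
  A.Nonempty ∧ Disjoint A S ∧ (G.induce A).Connected ∧
    ∀ u ∈ A, ∀ v, v ∉ A → v ∉ S → ¬ G.Adj u v

/-- `A` is a full component of `G - S`, i.e. `N(A) = S`. -/
def IsFullComp (G : SimpleGraph V) (S A : Set V) : Prop :=
  IsCompOutside G S A ∧ nbhdSet G A = S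

/-- `S` is a minimal separator: it has at least two full components. -/
def IsMinSep (G : SimpleGraph V) (S : Set V) : Prop :=
  ∃ A B : Set V, A ≠ B ∧ IsFullComp G S A ∧ IsFullComp G S B

/-- `f` is an induced copy of the path on `k` vertices in `G`. -/
def IsInducedPathMap (G : SimpleGraph V) {k : ℕ} (f : Fin k ↪ V) : Prop :=
  ∀ i j : Fin k, G.Adj (f i) (f j) ↔ ((i : ℕ) + 1 = (j : ℕ) ∨ (j : ℕ) + 1 = (i : ℕ))

/-- `G` is `P_t`-free: no induced path on `t` vertices. -/
def PFree (t : ℕ) (G : SimpleGraph V) : Prop :=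
  ¬ ∃ f : Fin t ↪ V, IsInducedPathMap G f

/-- `Ω` is a potential maximal clique. -/
def IsPMC (G : SimpleGraph V) (Ω : Set V) : Prop :=
  (∀ D : Set V, IsCompOutside G Ω D → nbhdSet G D ≠ Ω) ∧
  (∀ u ∈ Ω, ∀ v ∈ Ω, u ≠ v → ¬ G.Adj u v →
    ∃ D : Set V, IsCompOutside G Ω D ∧ u ∈ nbhdSet G D ∧ v ∈ nbhdSet G D)

/-- Vertex set: `A₁ ⊕ A₂ ⊕ S`, each a copy of `Fin n`. -/
abbrev ExV (n : ℕ) := Fin n ⊕ Fin n ⊕ Fin n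

/-- Adjacency: `A₁` and `A₂` are cliques, `S` is independent, and `sʲ` is adjacent
exactly to `a₁ʲ` and `a₂ʲ`. -/
def exAdj (n : ℕ) : ExV n → ExV n → Prop
  | Sum.inl i, Sum.inl j => i ≠ j
  | Sum.inr (Sum.inl i), Sum.inr (Sum.inl j) => i ≠ j
  | Sum.inl i, Sum.inr (Sum.inr j) => i = j
  | Sum.inr (Sum.inr i), Sum.inl j => i = j
  | Sum.inr (Sum.inl i), Sum.inr (Sum.inr j) => i = j
  | Sum.inr (Sum.inr i), Sum.inr (Sum.inl j) => i = j
  | _, _ => False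

def exGraph (n : ℕ) : SimpleGraph (ExV n) where
  Adj := exAdj n
  symm := by
    refine ⟨?_⟩
    rintro (i | i | i) (j | j | j) h <;> simp only [exAdj] at h ⊢ <;> omega
  loopless := by
    refine ⟨?_⟩
    rintro (i | i | i) h <;> simp only [exAdj] at h <;> omega

def ExA1 (n : ℕ) : Set (ExV n) := Set.range Sum.inl
def ExA2 (n : ℕ) : Set (ExV n) := Set.range (fun j => Sum.inr (Sum.inl j))
def ExS (n : ℕ) : Set (ExV n) := Set.range (fun j => Sum.inr (Sum.inr j))

/-! Each clique meets an induced path in at most two consecutive vertices, and the positions of a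
2-packing along an induced path are at least three apart, since `f i` and `f (i + 2)` have the
common neighbour `f (i + 1)`. In `exGraph n` the two cliques `A₁`, `A₂` and the 2-packing `S`
cover all vertices, so an induced path has at most `2 + 2 + 3 = 7` vertices. -/

def IsTwoPacking (G : SimpleGraph V) (T : Set V) : Prop :=
  T.Pairwise fun x y => ¬ G.Adj x y ∧ ∀ z, G.Adj x z → ¬ G.Adj z y

lemma Fin.ncard_le_of_pairwise_add_three_le {k : ℕ} {s : Set (Fin k)}
    (hs : s.Pairwise fun i j => (i : ℕ) + 3 ≤ j ∨ (j : ℕ) + 3 ≤ i) :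
    s.ncard ≤ (k + 2) / 3 := by
  calc s.ncard ≤ (Iio ((k + 2) / 3)).ncard := by
        refine ncard_le_ncard_of_injOn (fun i => (i : ℕ) / 3) (fun i _ => ?_) ?_
        · simp only [mem_Iio]; omega
        · intro i hi j hj hij
          by_contra hne
          have := hs hi hj hne
          simp only at hij
          omega
    _ = (k + 2) / 3 := ncard_Iio_nat _

namespace IsInducedPathMap

variable {G : SimpleGraph V} {k : ℕ} {f : Fin k ↪ V}

lemma ncard_preimage_le_two_of_isClique (hf : IsInducedPathMap G f) {K : Set V}
    (hK : G.IsClique K) : {i | f i ∈ K}.ncard ≤ 2 := by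
  by_contra! h
  rw [two_lt_ncard_iff] at h
  obtain ⟨a, b, c, ha, hb, hc, hab, hac, hbc⟩ := h
  have adj {i j : Fin k} (hi : f i ∈ K) (hj : f j ∈ K) (hij : i ≠ j) :=
    (hf i j).mp (hK hi hj (f.injective.ne hij))
  have := adj ha hb hab
  have := adj ha hc hac
  have := adj hb hc hbc
  omega

lemma add_three_le_of_isTwoPacking (hf : IsInducedPathMap G f) {T : Set V}
    (hT : IsTwoPacking G T) {i j : Fin k} (hi : f i ∈ T) (hj : f j ∈ T) (hij : i ≠ j) :
    (i : ℕ) + 3 ≤ j ∨ (j : ℕ) + 3 ≤ i := by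
  wlog hlt : i < j generalizing i j
  · exact (this hj hi hij.symm (lt_of_le_of_ne (not_lt.mp hlt) hij.symm)).symm
  obtain ⟨hnadj, hnomid⟩ := hT hi hj (f.injective.ne hij)
  have hnext : ¬ (i : ℕ) + 1 = j := fun h => hnadj ((hf i j).mpr (Or.inl h))
  by_contra! hclose
  let m : Fin k := ⟨i + 1, by omega⟩
  exact hnomid (f m) ((hf i m).mpr (Or.inl rfl)) ((hf m j).mpr (Or.inl (by simp [m]; omega)))

lemma ncard_preimage_le_of_isTwoPacking (hf : IsInducedPathMap G f) {T : Set V}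
    (hT : IsTwoPacking G T) : {i | f i ∈ T}.ncard ≤ (k + 2) / 3 :=
  Fin.ncard_le_of_pairwise_add_three_le fun _ hi _ hj hij =>
    hf.add_three_le_of_isTwoPacking hT hi hj hij

lemma le_of_range_subset_union (hf : IsInducedPathMap G f) {K₁ K₂ T : Set V}
    (hK₁ : G.IsClique K₁) (hK₂ : G.IsClique K₂) (hT : IsTwoPacking G T)
    (hcover : range f ⊆ K₁ ∪ K₂ ∪ T) : k ≤ 4 + (k + 2) / 3 := by
  have hpre : {i | f i ∈ K₁} ∪ {i | f i ∈ K₂} ∪ {i | f i ∈ T} = univ :=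
    eq_univ_of_forall fun i => hcover (mem_range_self (f := f) i)
  calc k = (univ : Set (Fin k)).ncard := by simp
    _ ≤ {i | f i ∈ K₁}.ncard + {i | f i ∈ K₂}.ncard + {i | f i ∈ T}.ncard := by
        rw [← hpre]
        exact (ncard_union_le _ _).trans (add_le_add_left (ncard_union_le _ _) _)
    _ ≤ 4 + (k + 2) / 3 := by
        have := hf.ncard_preimage_le_two_of_isClique hK₁
        have := hf.ncard_preimage_le_two_of_isClique hK₂
        have := hf.ncard_preimage_le_of_isTwoPacking hT
        omega

end IsInducedPathMap

lemma isClique_exA1 (n : ℕ) : (exGraph n).IsClique (ExA1 n) := by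
  rintro _ ⟨i, rfl⟩ _ ⟨j, rfl⟩ hij
  exact fun h => hij (congrArg Sum.inl h)

lemma isClique_exA2 (n : ℕ) : (exGraph n).IsClique (ExA2 n) := by
  rintro _ ⟨i, rfl⟩ _ ⟨j, rfl⟩ hij
  exact fun h => hij (congrArg (fun j => Sum.inr (Sum.inl j)) h)

lemma isTwoPacking_exS (n : ℕ) : IsTwoPacking (exGraph n) (ExS n) := by
  rintro _ ⟨i, rfl⟩ _ ⟨j, rfl⟩ hij
  refine ⟨id, ?_⟩
  rintro (z | z | z) hiz hzj
  · exact hij (congrArg (fun j => Sum.inr (Sum.inr j)) ((hiz : i = z).trans hzj))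
  · exact hij (congrArg (fun j => Sum.inr (Sum.inr j)) ((hiz : i = z).trans hzj))
  · exact hiz

lemma exA1_union_exA2_union_exS (n : ℕ) : ExA1 n ∪ ExA2 n ∪ ExS n = univ := by
  refine eq_univ_of_forall ?_
  rintro (i | i | i)
  · exact Or.inl (Or.inl ⟨i, rfl⟩)
  · exact Or.inl (Or.inr ⟨i, rfl⟩)
  · exact Or.inr ⟨i, rfl⟩

/-- The concrete graph `exGraph n` is `P₈`-free. -/
theorem stmt_6 (n : ℕ) : PFree 8 (exGraph n) := by
  rintro ⟨f, hf⟩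
  have := hf.le_of_range_subset_union (isClique_exA1 n) (isClique_exA2 n) (isTwoPacking_exS n)
    (exA1_union_exA2_union_exS n ▸ subset_univ _)
  omega
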